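/- arXiv:1005.3721 — 3 statements merged into one kernel-verified Lean document; each statement's English description precedes it below -/
import Mathlib

section
/- Let J be the Jacobi matrix with diagonal entries 𝔠_j = 1 + 𝔡_j² and off-diagonal entries 𝔡_j, where 𝔡_j ∈ ℝ. If η ∈ ℓ² satisfies the formal equations 𝔡_{k-1} η_{k-1} + (1+𝔡_k²) η_k + 𝔡_k η_{k+1} = 0 for all k ≥ 0 (with 𝔡_{-1} = 0), then η = 0. Equivalently, ker J* = {0}. -/
open Complex

/-- The formal action of the Jacobi matrix `J` with diagonal `1 + 𝔡ⱼ²` and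
off-diagonal entries `𝔡ⱼ` on a sequence (with the convention `𝔡₋₁ = 0`). -/
def jacobiJ (d : ℕ → ℝ) (x : ℕ → ℂ) : ℕ → ℂ := fun k =>
  (match k with
    | 0 => 0
    | k + 1 => (d k : ℂ) * x k) + ((1 : ℂ) + (d k : ℂ) ^ 2) * x k + (d k : ℂ) * x (k + 1)

/-!
`J = Bᵀ B`, where `B` is the lower bidiagonal matrix with `1` on the diagonal and `𝔡ⱼ` below it.
Summing `conj ηₖ (J η)ₖ` by parts over `k < M` gives `∑_{k ≤ M} |(B η)ₖ|² = conj η_M (B η)_M`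
when `J η = 0`; since the last summand is at most the whole sum, this gives
`∑_{k ≤ M} |(B η)ₖ|² ≤ |η_M|²`. As `η_M → 0`, `B η = 0`, and `B` is injective.
-/

open Finset Filter Topology ComplexConjugate

def lowerBidiag (d : ℕ → ℝ) (x : ℕ → ℂ) : ℕ → ℂ
  | 0 => x 0
  | n + 1 => (d n : ℂ) * x n + x (n + 1)

section

variable (d : ℕ → ℝ) (x : ℕ → ℂ)

theorem jacobiJ_eq_lowerBidiag (k : ℕ) :
    jacobiJ d x k = lowerBidiag d x k + (d k : ℂ) * lowerBidiag d x (k + 1) := by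
  cases k <;> simp only [jacobiJ, lowerBidiag] <;> ring

theorem sum_conj_mul_jacobiJ (M : ℕ) :
    ∑ k ∈ range M, conj (x k) * jacobiJ d x k =
      ∑ k ∈ range (M + 1), (‖lowerBidiag d x k‖ ^ 2 : ℂ) - conj (x M) * lowerBidiag d x M := by
  induction M with
  | zero => simp only [range_zero, sum_empty, zero_add, sum_range_one, lowerBidiag,
      Complex.conj_mul', sub_self]
  | succ M ih =>
    rw [sum_range_succ, ih, sum_range_succ _ (M + 1), jacobiJ_eq_lowerBidiag,
      ← Complex.conj_mul' (lowerBidiag d x (M + 1))]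
    simp only [lowerBidiag, map_add, map_mul, Complex.conj_ofReal]
    ring

theorem sum_sq_norm_lowerBidiag_le (hJ : ∀ k, jacobiJ d x k = 0) (M : ℕ) :
    ∑ k ∈ range (M + 1), ‖lowerBidiag d x k‖ ^ 2 ≤ ‖x M‖ ^ 2 := by
  set S := ∑ k ∈ range (M + 1), ‖lowerBidiag d x k‖ ^ 2
  have hS : S = ‖x M‖ * ‖lowerBidiag d x M‖ := by
    have h := sum_conj_mul_jacobiJ d x M
    simp only [hJ, mul_zero, sum_const_zero] at h
    have hSC : (S : ℂ) = conj (x M) * lowerBidiag d x M := by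
      push_cast [S]
      linear_combination -h
    rw [← Complex.norm_conj (x M), ← norm_mul, ← hSC,
      Complex.norm_of_nonneg (sum_nonneg fun _ _ => sq_nonneg _)]
  have hlast : ‖lowerBidiag d x M‖ ^ 2 ≤ S :=
    single_le_sum (f := fun k => ‖lowerBidiag d x k‖ ^ 2) (fun _ _ => sq_nonneg _)
      (self_mem_range_succ M)
  nlinarith [norm_nonneg (x M), norm_nonneg (lowerBidiag d x M)]

theorem lowerBidiag_eq_zero (hx : Tendsto (fun k => ‖x k‖ ^ 2) atTop (𝓝 0))
    (hJ : ∀ k, jacobiJ d x k = 0) : lowerBidiag d x = 0 := by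
  funext n
  have hle : ‖lowerBidiag d x n‖ ^ 2 ≤ 0 := by
    refine ge_of_tendsto hx (eventually_ge_atTop n |>.mono fun M hM => ?_)
    calc ‖lowerBidiag d x n‖ ^ 2
        ≤ ∑ k ∈ range (M + 1), ‖lowerBidiag d x k‖ ^ 2 :=
          single_le_sum (f := fun k => ‖lowerBidiag d x k‖ ^ 2) (fun _ _ => sq_nonneg _)
            (mem_range.mpr (Nat.lt_succ_of_le hM))
      _ ≤ ‖x M‖ ^ 2 := sum_sq_norm_lowerBidiag_le d x hJ M
  simpa using hle

theorem eq_zero_of_lowerBidiag_eq_zero (h : lowerBidiag d x = 0) : x = 0 := by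
  funext n
  induction n with
  | zero => simpa [lowerBidiag] using congrFun h 0
  | succ n ih => simpa [lowerBidiag, ih] using congrFun h (n + 1)

end

/-- if `η ∈ ℓ²` satisfies the formal equations
`𝔡_{k-1} η_{k-1} + (1+𝔡_k²) η_k + 𝔡_k η_{k+1} = 0` for all `k ≥ 0`
(i.e. `J*η = 0`), then `η = 0`; equivalently `ker J* = {0}`. -/
theorem jacobiJ_adjoint_trivial_kernel
    (d : ℕ → ℝ) (η : ℕ → ℂ) (hη : Summable (fun k => ‖η k‖ ^ 2))
    (heq : ∀ k : ℕ, jacobiJ d η k = 0) :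
    η = 0 :=
  eq_zero_of_lowerBidiag_eq_zero d η (lowerBidiag_eq_zero d η hη.tendsto_atTop_zero heq)
end

section
/- For η ∈ ℓ²(ℕ) satisfying the tridiagonal relations 𝔡_{k-1} η_{k-1} + (1+𝔡_k²) η_k + 𝔡_k η_{k+1} = ζ_k with ζ ∈ ℓ² (i.e. J*η = ζ), one has the identity Σ_k ζ_k · conj(η_k) = |η_0|² + Σ_{n≥1} |𝔡_{n-1} η_{n-1} + η_n|². -/
/-!
`J = B*B` for the lower bidiagonal matrix `B` with unit diagonal and subdiagonal `𝔡`, so formally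
`⟨Jη, η⟩ = ‖Bη‖²`. Termwise, `ζₖ conj ηₖ - |(Bη)ₖ|² = gₖ₊₁ - gₖ` with
`gₖ = conj((Bη)ₖ - ηₖ) (Bη)ₖ = 𝔡ₖ₋₁ conj ηₖ₋₁ (Bη)ₖ`, and `g₀ = 0`, `gₖ → 0` because `η` and `Bη` are
square-summable, so the two series differ by a vanishing telescoping sum.
-/

open Complex

open ComplexConjugate Filter Topology

theorem HasSum.sub_eq_of_sub_eq_sub_succ {G : Type*} [AddCommGroup G] [TopologicalSpace G]
    [IsTopologicalAddGroup G] [T2Space G] {f g h : ℕ → G} {a b c : G} (hf : HasSum f a)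
    (hg : HasSum g b) (hh : Tendsto h atTop (𝓝 c)) (hfg : ∀ k, f k - g k = h (k + 1) - h k) :
    a - b = c - h 0 := by
  have hpartial : ∀ n, ∑ k ∈ Finset.range n, (f k - g k) = h n - h 0 := fun n => by
    simp only [hfg, Finset.sum_range_sub]
  refine tendsto_nhds_unique (hf.sub hg).tendsto_sum_nat ?_
  simpa only [hpartial] using hh.sub_const (h 0)

theorem tendsto_zero_of_summable_norm_sq {E : Type*} [SeminormedAddGroup E] {f : ℕ → E}
    (hf : Summable fun k => ‖f k‖ ^ 2) : Tendsto f atTop (𝓝 0) := by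
  rw [tendsto_zero_iff_norm_tendsto_zero]
  simpa [Real.sqrt_sq (norm_nonneg _)] using hf.tendsto_atTop_zero.sqrt

def jacobiB (d : ℕ → ℝ) (x : ℕ → ℂ) : ℕ → ℂ
  | 0 => x 0
  | k + 1 => (d k : ℂ) * x k + x (k + 1)

theorem jacobiJ_eq_jacobiB_add (d : ℕ → ℝ) (x : ℕ → ℂ) (k : ℕ) :
    jacobiJ d x k = jacobiB d x k + d k * jacobiB d x (k + 1) := by
  cases k <;> simp only [jacobiJ, jacobiB] <;> ring

theorem jacobiJ_mul_conj_sub_normSq (d : ℕ → ℝ) (x : ℕ → ℂ) (k : ℕ) :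
    jacobiJ d x k * conj (x k) - (‖jacobiB d x k‖ ^ 2 : ℝ) =
      conj (jacobiB d x (k + 1) - x (k + 1)) * jacobiB d x (k + 1) -
        conj (jacobiB d x k - x k) * jacobiB d x k := by
  rw [jacobiJ_eq_jacobiB_add, ofReal_pow, ← mul_conj']
  cases k <;>
    simp only [jacobiB, add_sub_cancel_right, sub_self, map_add, map_mul, map_zero, conj_ofReal] <;>
    ring

theorem jacobiJ_quadratic_identity_general
    (d : ℕ → ℝ) (η ζ : ℕ → ℂ)
    (hη : Summable (fun k => ‖η k‖ ^ 2))
    (heq : ∀ k : ℕ, jacobiJ d η k = ζ k)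
    (hs1 : Summable (fun k => ζ k * (starRingEnd ℂ) (η k)))
    (hs2 : Summable (fun n : ℕ => ‖(d n : ℂ) * η n + η (n + 1)‖ ^ 2)) :
    (∑' k : ℕ, ζ k * (starRingEnd ℂ) (η k)) =
      (‖η 0‖ ^ 2 : ℝ) + ((∑' n : ℕ, ‖(d n : ℂ) * η n + η (n + 1)‖ ^ 2 : ℝ) : ℂ) := by
  set b := jacobiB d η
  have hb : Summable fun k => ‖b k‖ ^ 2 := (summable_nat_add_iff 1).1 hs2
  have hg : Tendsto (fun k => conj (b k - η k) * b k) atTop (𝓝 0) := by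
    have hb0 := tendsto_zero_of_summable_norm_sq hb
    simpa using ((continuous_conj.tendsto _).comp (hb0.sub
      (tendsto_zero_of_summable_norm_sq hη))).mul hb0
  have htel := hs1.hasSum.sub_eq_of_sub_eq_sub_succ (Complex.hasSum_ofReal.2 hb.hasSum) hg
    fun k => heq k ▸ jacobiJ_mul_conj_sub_normSq d η k
  have hg0 : conj (b 0 - η 0) * b 0 = 0 := by simp [b, jacobiB]
  rw [hg0, sub_zero, sub_eq_zero] at htel
  rw [htel, hb.tsum_eq_zero_add, ofReal_add]
  rfl

/-- if `η, ζ ∈ ℓ²` and `J*η = ζ`, i.e.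
`𝔡_{k-1} η_{k-1} + (1+𝔡_k²) η_k + 𝔡_k η_{k+1} = ζ_k` for all `k`, then
`∑ₖ ζₖ conj(ηₖ) = |η₀|² + ∑_{n≥1} |𝔡_{n-1} η_{n-1} + η_n|²`. -/
theorem jacobiJ_quadratic_identity
    (d : ℕ → ℝ) (η ζ : ℕ → ℂ)
    (hη : Summable (fun k => ‖η k‖ ^ 2)) (hζ : Summable (fun k => ‖ζ k‖ ^ 2))
    (heq : ∀ k : ℕ, jacobiJ d η k = ζ k)
    (hs1 : Summable (fun k => ζ k * (starRingEnd ℂ) (η k)))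
    (hs2 : Summable (fun n : ℕ => ‖(d n : ℂ) * η n + η (n + 1)‖ ^ 2)) :
    (∑' k : ℕ, ζ k * (starRingEnd ℂ) (η k)) =
      (‖η 0‖ ^ 2 : ℝ) + ((∑' n : ℕ, ‖(d n : ℂ) * η n + η (n + 1)‖ ^ 2 : ℝ) : ℂ) :=
  jacobiJ_quadratic_identity_general d η ζ hη heq hs1 hs2
end

section
/- Let φ be in the class R₀, i.e. φ(λ) = ∫ dσ(t)/(t-λ) for a probability measure σ, and suppose all the interpolation data come from φ at distinct points z_0, …, z_n ∈ ℂ_+ via the modified Schur algorithm producing the continued-fraction convergent -Q_{n+1}/P_{n+1}. Then the rational function θ_n m_{[0,n]}, where m_{[0,n]}(λ) = -Q_{n+1}(λ)/P_{n+1}(λ) = ((H_{[0,n]} - λ J_{[0,n]})^{-1} e_0, e_0) and θ_n = det J_{[0,n]}/det J_{[1,n]} > 0, belongs to R₀: i.e. Im(θ_n m_{[0,n]}(λ))/Im λ > 0 for nonreal λ and sup_{y>0} |y · θ_n m_{[0,n]}(iy)| = 1. -/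
/-!
For `u = (H - λJ)⁻¹ e₀` one has `conj u₀ = ⟪(H - λJ)u, u⟫`, and taking imaginary parts gives
`Im m(λ) = Im λ · ⟪Ju, u⟫` with `⟪Ju, u⟫ > 0`. Cauchy–Schwarz for the inner product defined by `J`,
applied to `u` and `w = J⁻¹ e₀`, gives `|u₀|² ≤ (J⁻¹)₀₀ ⟪Ju, u⟫ = (J⁻¹)₀₀ Im u₀ / y` at `λ = iy`,
so `y |m(iy)| ≤ (J⁻¹)₀₀`; on the other hand `y m(iy) = ((1/y) H - iJ)⁻¹₀₀ → i (J⁻¹)₀₀`.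
By Cramer's rule `θₙ = 1 / (J⁻¹)₀₀`, so the supremum is `1`.
Positive definiteness of `J` comes from `J = KᴴK`, where `K` is the injective
`(n+2) × (n+1)` lower bidiagonal matrix with unit diagonal and subdiagonal `b`.
-/

open Complex Matrix

/-- The truncation `H_{[off, off+m-1]}` of the Hermitian tridiagonal matrix `H`
with diagonal entries `a⁽¹⁾ₗ` and off-diagonal entries `zₗ bₗ`, `conj(zₗ) bₗ`. -/
def npH (a1 b : ℕ → ℝ) (z : ℕ → ℂ) (off m : ℕ) : Matrix (Fin m) (Fin m) ℂ :=
  Matrix.of fun i k =>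
    if (i : ℕ) = (k : ℕ) then (a1 (off + i) : ℂ)
    else if (i : ℕ) + 1 = (k : ℕ) then z (off + i) * (b (off + i) : ℂ)
    else if (k : ℕ) + 1 = (i : ℕ) then (starRingEnd ℂ) (z (off + k)) * (b (off + k) : ℂ)
    else 0

/-- The truncation `J_{[off, off+m-1]}` of the positive definite real symmetric
tridiagonal matrix `J` with diagonal entries `a⁽²⁾ₗ = 1 + bₗ²` and off-diagonal `bₗ`. -/
def npJ (b : ℕ → ℝ) (off m : ℕ) : Matrix (Fin m) (Fin m) ℂ :=
  Matrix.of fun i k =>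
    if (i : ℕ) = (k : ℕ) then (1 : ℂ) + (b (off + i) : ℂ) ^ 2
    else if (i : ℕ) + 1 = (k : ℕ) then (b (off + i) : ℂ)
    else if (k : ℕ) + 1 = (i : ℕ) then (b (off + k) : ℂ)
    else 0

open ComplexOrder Filter Topology

lemma ciSup_pos_eq_of_forall_le_of_tendsto {f : ℝ → ℝ} {c : ℝ} (hle : ∀ y, 0 < y → f y ≤ c)
    (hlim : Tendsto f atTop (𝓝 c)) : ⨆ y : {y : ℝ // 0 < y}, f y = c := by
  have : Nonempty {y : ℝ // 0 < y} := ⟨⟨1, one_pos⟩⟩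
  refine ciSup_eq_of_forall_le_of_forall_lt_exists_gt (fun y => hle y y.2) fun w hw => ?_
  obtain ⟨y, hwy, hy⟩ := ((hlim.eventually (lt_mem_nhds hw)).and (eventually_gt_atTop 0)).exists
  exact ⟨⟨y, hy⟩, hwy⟩

namespace Matrix

lemma det_div_det_submatrix_succ_succ {K : Type*} [Field K] {n : ℕ}
    (A : Matrix (Fin (n + 1)) (Fin (n + 1)) K) :
    A.det / (A.submatrix Fin.succ Fin.succ).det = (A⁻¹ 0 0)⁻¹ := by
  rw [inv_def, smul_apply, adjugate_fin_succ_eq_det_submatrix, Fin.succAbove_zero,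
    Ring.inverse_eq_inv', smul_eq_mul]
  simp [div_eq_mul_inv, mul_comm]

variable {ι : Type*} [Fintype ι]

lemma PosSemidef.norm_star_dotProduct_mulVec_sq_le {M : Matrix ι ι ℂ} (hM : M.PosSemidef)
    (x y : ι → ℂ) :
    ‖star x ⬝ᵥ (M *ᵥ y)‖ ^ 2 ≤ (star x ⬝ᵥ (M *ᵥ x)).re * (star y ⬝ᵥ (M *ᵥ y)).re := by
  let := M.toSeminormedAddCommGroup hM
  let := M.toInnerProductSpace hM
  have h := inner_mul_inner_self_le (𝕜 := ℂ) x y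
  have e : ∀ a b : ι → ℂ, (inner ℂ a b : ℂ) = star a ⬝ᵥ (M *ᵥ b) := fun a b => dotProduct_comm _ _
  rw [norm_inner_symm y x, ← sq, e, e, e] at h
  exact h

lemma im_star_dotProduct_sub_smul_mulVec_self {H J : Matrix ι ι ℂ} (hH : H.IsHermitian)
    (hJ : J.IsHermitian) (lam : ℂ) (v : ι → ℂ) :
    (star v ⬝ᵥ ((H - lam • J) *ᵥ v)).im = -(lam.im * (star v ⬝ᵥ (J *ᵥ v)).re) := by
  have hHv : (star v ⬝ᵥ (H *ᵥ v)).im = 0 := hH.im_star_dotProduct_mulVec_self v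
  have hJv : (star v ⬝ᵥ (J *ᵥ v)).im = 0 := hJ.im_star_dotProduct_mulVec_self v
  simp [sub_mulVec, smul_mulVec, dotProduct_sub, dotProduct_smul, hHv, hJv]

variable [DecidableEq ι]

lemma inv_smul_of_ne_zero {K : Type*} [Field K] (A : Matrix ι ι K) {c : K} (hc : c ≠ 0) :
    (c • A)⁻¹ = c⁻¹ • A⁻¹ := by
  by_cases hA : IsUnit A.det
  · exact inv_smul' A (Units.mk0 c hc) hA
  · have hcA : ¬IsUnit (c • A).det := by
      rwa [det_smul, IsUnit.mul_iff, and_iff_right (hc.isUnit.pow _)]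
    rw [nonsing_inv_apply_not_isUnit _ hA, nonsing_inv_apply_not_isUnit _ hcA, smul_zero]

lemma mulVec_inv_col {M : Matrix ι ι ℂ} (hM : IsUnit M.det) (i : ι) :
    M *ᵥ M⁻¹.col i = Pi.single i 1 := by
  rw [← mulVec_single_one, mulVec_mulVec, mul_nonsing_inv _ hM, one_mulVec]

lemma inv_col_ne_zero {M : Matrix ι ι ℂ} (hM : IsUnit M.det) (i : ι) : M⁻¹.col i ≠ 0 := by
  intro h
  simpa [h] using congrFun (mulVec_inv_col hM i) i

variable {H J : Matrix ι ι ℂ}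

lemma isUnit_det_sub_smul (hH : H.IsHermitian) (hJ : J.PosDef) {lam : ℂ} (hlam : lam.im ≠ 0) :
    IsUnit (H - lam • J).det := by
  rw [isUnit_iff_ne_zero]
  intro hdet
  obtain ⟨v, hv, hMv⟩ := exists_mulVec_eq_zero_iff.2 hdet
  have h := im_star_dotProduct_sub_smul_mulVec_self hH hJ.1 lam v
  rw [hMv, dotProduct_zero, zero_im, zero_eq_neg] at h
  exact mul_ne_zero hlam (hJ.re_dotProduct_pos hv).ne' h

lemma im_inv_sub_smul_apply_self (hH : H.IsHermitian) (hJ : J.PosDef) {lam : ℂ}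
    (hlam : lam.im ≠ 0) (i : ι) :
    ((H - lam • J)⁻¹ i i).im =
      lam.im * (star ((H - lam • J)⁻¹.col i) ⬝ᵥ (J *ᵥ (H - lam • J)⁻¹.col i)).re := by
  have h := im_star_dotProduct_sub_smul_mulVec_self hH hJ.1 lam ((H - lam • J)⁻¹.col i)
  rw [mulVec_inv_col (isUnit_det_sub_smul hH hJ hlam), dotProduct_single, mul_one] at h
  simpa using h

lemma im_inv_sub_smul_apply_self_div_im_pos (hH : H.IsHermitian) (hJ : J.PosDef) {lam : ℂ}
    (hlam : lam.im ≠ 0) (i : ι) : 0 < ((H - lam • J)⁻¹ i i).im / lam.im := by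
  rw [im_inv_sub_smul_apply_self hH hJ hlam, mul_div_cancel_left₀ _ hlam]
  exact hJ.re_dotProduct_pos (inv_col_ne_zero (isUnit_det_sub_smul hH hJ hlam) i)

lemma norm_mul_inv_sub_smul_I_apply_self_le (hH : H.IsHermitian) (hJ : J.PosDef)
    {y : ℝ} (hy : 0 < y) (i : ι) :
    ‖(y : ℂ) * (H - (y * I) • J)⁻¹ i i‖ ≤ (J⁻¹ i i).re := by
  have hlam : ((y : ℂ) * I).im = y := by simp
  have him := im_inv_sub_smul_apply_self hH hJ (hlam.symm ▸ hy.ne') i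
  rw [hlam] at him
  set M := H - ((y : ℂ) * I) • J
  set u := M⁻¹.col i
  set w := J⁻¹.col i
  have hJw : J *ᵥ w = Pi.single i 1 := mulVec_inv_col ((isUnit_iff_isUnit_det J).1 hJ.isUnit) i
  have hwu : star w ⬝ᵥ (J *ᵥ u) = M⁻¹ i i := by
    rw [dotProduct_mulVec, ← hJ.1.eq, ← star_mulVec, hJw]
    simp [u]
  have hww : (star w ⬝ᵥ (J *ᵥ w)).re = (J⁻¹ i i).re := by
    rw [hJw]
    simp [w]
  have hcs := hJ.posSemidef.norm_star_dotProduct_mulVec_sq_le w u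
  rw [hwu, hww] at hcs
  have hc : 0 < (J⁻¹ i i).re := (Complex.pos_iff.1 hJ.inv.diag_pos).1
  have hle : (M⁻¹ i i).im ≤ ‖M⁻¹ i i‖ := (le_abs_self _).trans (abs_im_le_norm _)
  -- `y ‖u i‖² ≤ c y ⟪Ju, u⟫ = c Im (u i) ≤ c ‖u i‖`, with `c = (J⁻¹)ᵢᵢ`
  have key : ‖M⁻¹ i i‖ * (y * ‖M⁻¹ i i‖) ≤ ‖M⁻¹ i i‖ * (J⁻¹ i i).re := by
    nlinarith [mul_le_mul_of_nonneg_left hcs hy.le, mul_le_mul_of_nonneg_left hle hc.le]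
  rw [norm_mul, norm_real, Real.norm_of_nonneg hy.le]
  rcases (norm_nonneg (M⁻¹ i i)).eq_or_lt with h0 | hpos
  · rw [← h0, mul_zero]
    exact hc.le
  · exact le_of_mul_le_mul_left key hpos

lemma tendsto_mul_inv_sub_smul_I_apply (H : Matrix ι ι ℂ) (hJ : IsUnit J.det) (i j : ι) :
    Tendsto (fun y : ℝ => (y : ℂ) * (H - (y * I) • J)⁻¹ i j) atTop (𝓝 (I * J⁻¹ i j)) := by
  set g : ℂ → ℂ := fun t => (t • H - I • J)⁻¹ i j
  have hA0 : (0 : ℂ) • H - I • J = (-I) • J := by rw [zero_smul, zero_sub, neg_smul]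
  have hg0 : g 0 = I * J⁻¹ i j := by
    simp only [g, hA0, inv_smul_of_ne_zero J (neg_ne_zero.2 I_ne_zero), smul_apply, smul_eq_mul,
      inv_neg, inv_I, neg_neg]
  have hg : ContinuousAt g 0 := by
    have hdet : ((0 : ℂ) • H - I • J).det ≠ 0 := by
      rw [hA0, det_smul]
      exact mul_ne_zero (pow_ne_zero _ (neg_ne_zero.2 I_ne_zero)) hJ.ne_zero
    have hinv : ContinuousAt Inv.inv ((0 : ℂ) • H - I • J) :=
      continuousAt_matrix_inv _ (Ring.inverse_eq_inv' (G₀ := ℂ) ▸ continuousAt_inv₀ hdet)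
    exact (continuous_apply_apply i j).continuousAt.comp
      (hinv.comp (f := fun t : ℂ => t • H - I • J) (by fun_prop))
  have hscale : ∀ᶠ y : ℝ in atTop, g (y : ℂ)⁻¹ = (y : ℂ) * (H - (y * I) • J)⁻¹ i j := by
    filter_upwards [eventually_ne_atTop 0] with y hy
    have hy' : (y : ℂ) ≠ 0 := ofReal_ne_zero.2 hy
    have : H - (y * I) • J = (y : ℂ) • ((y : ℂ)⁻¹ • H - I • J) := by
      rw [smul_sub, smul_smul, smul_smul, mul_inv_cancel₀ hy', one_smul]
    rw [this, inv_smul_of_ne_zero _ hy', smul_apply, smul_eq_mul, ← mul_assoc, mul_inv_cancel₀ hy',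
      one_mul]
  rw [← hg0]
  refine (hg.tendsto.comp ?_).congr' hscale
  simpa [Function.comp_def] using (continuous_ofReal.tendsto 0).comp tendsto_inv_atTop_zero

theorem normalized_resolvent_apply_mem_R0 (hH : H.IsHermitian) (hJ : J.PosDef) (i : ι) :
    (∀ lam : ℂ, lam.im ≠ 0 → 0 < ((J⁻¹ i i)⁻¹ * (H - lam • J)⁻¹ i i).im / lam.im) ∧
    (⨆ y : {y : ℝ // 0 < y},
      ‖(y.1 : ℂ) * ((J⁻¹ i i)⁻¹ * (H - ((y.1 : ℂ) * I) • J)⁻¹ i i)‖) = 1 := by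
  obtain ⟨c, hc, hci⟩ : ∃ c : ℝ, 0 < c ∧ (c : ℂ) = J⁻¹ i i :=
    RCLike.pos_iff_exists_ofReal.1 hJ.inv.diag_pos
  have hbound := fun y (hy : 0 < y) => norm_mul_inv_sub_smul_I_apply_self_le hH hJ hy i
  have hlim := tendsto_mul_inv_sub_smul_I_apply H ((isUnit_iff_isUnit_det J).1 hJ.isUnit) i i
  rw [← hci] at hbound hlim ⊢
  refine ⟨fun lam hlam => ?_, ciSup_pos_eq_of_forall_le_of_tendsto
    (f := fun y : ℝ => ‖(y : ℂ) * ((c : ℂ)⁻¹ * (H - ((y : ℂ) * I) • J)⁻¹ i i)‖) (fun y hy => ?_) ?_⟩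
  · rw [← ofReal_inv, im_ofReal_mul, mul_div_assoc]
    exact mul_pos (inv_pos.2 hc) (im_inv_sub_smul_apply_self_div_im_pos hH hJ hlam i)
  · rw [mul_left_comm, norm_mul, norm_inv, norm_real, Real.norm_of_nonneg hc.le,
      inv_mul_le_iff₀ hc, mul_one]
    simpa using hbound y hy
  · have hI : ‖I * ((c : ℂ)⁻¹ * c)‖ = 1 := by
      rw [inv_mul_cancel₀ (ofReal_ne_zero.2 hc.ne'), mul_one, norm_I]
    rw [← hI]
    simpa only [mul_left_comm] using (hlim.const_mul (c : ℂ)⁻¹).norm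

end Matrix

def npJFactor (b : ℕ → ℝ) (off m : ℕ) : Matrix (Fin (m + 1)) (Fin m) ℂ :=
  Matrix.of fun j k =>
    (if j = k.castSucc then 1 else 0) + if j = k.succ then (b (off + k) : ℂ) else 0

lemma npJ_eq_conjTranspose_mul_self (b : ℕ → ℝ) (off m : ℕ) :
    npJ b off m = (npJFactor b off m)ᴴ * npJFactor b off m := by
  ext i k
  simp only [npJ, of_apply, npJFactor, mul_apply, conjTranspose_apply, star_add, RCLike.star_def,
    MonoidWithZeroHom.map_ite_one_zero, mul_add, mul_ite, mul_one, mul_zero, add_mul, ite_mul,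
    one_mul, zero_mul, Finset.sum_add_distrib, Finset.sum_ite_eq', Finset.mem_univ, ↓reduceIte,
    Fin.castSucc_inj, Fin.succ_inj]
  rcases eq_or_ne i k with rfl | hik
  · simp only [↓reduceIte, Fin.ext_iff, Fin.val_castSucc, Fin.val_succ, Nat.left_eq_add,
      one_ne_zero, map_zero, add_zero, Nat.add_eq_left, conj_ofReal, zero_add, add_right_inj]
    ring
  · simp only [Fin.val_ne_of_ne hik, Fin.val_ne_of_ne hik.symm, Fin.ext_iff, Fin.val_succ,
      Fin.val_castSucc, apply_ite (starRingEnd ℂ), map_zero, conj_ofReal, ↓reduceIte]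
    split_ifs <;> first | omega | simp

lemma npH_isHermitian (a1 b : ℕ → ℝ) (z : ℕ → ℂ) (off m : ℕ) :
    (npH a1 b z off m).IsHermitian := by
  ext i k
  simp only [conjTranspose_apply, npH, of_apply]
  split_ifs <;> first | omega | simp_all

lemma npJ_submatrix_succ_succ (b : ℕ → ℝ) (n : ℕ) :
    (npJ b 0 (n + 1)).submatrix Fin.succ Fin.succ = npJ b 1 n := by
  ext i k
  simp only [submatrix_apply, npJ, of_apply, Fin.val_succ]
  grind

lemma npJFactor_mulVec_injective (b : ℕ → ℝ) (off m : ℕ) :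
    Function.Injective (npJFactor b off m).mulVec := by
  set T := (npJFactor b off m).submatrix Fin.castSucc id
  have hT : T.det = 1 := by
    rw [det_of_isLowerTriangular T fun j k (hjk : j < k) => by
      simp only [T, npJFactor, submatrix_apply, of_apply, id, Fin.ext_iff, Fin.val_castSucc,
        Fin.val_succ]
      rw [if_neg (by omega), if_neg (by omega), add_zero]]
    simp [T, npJFactor, Fin.ext_iff]
  intro x y hxy
  have hTxy : T *ᵥ x = T *ᵥ y := funext fun j => congrFun hxy j.castSucc
  exact mulVec_injective_iff_isUnit.2 ((isUnit_iff_isUnit_det T).2 (hT ▸ isUnit_one)) hTxy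

lemma npJ_posDef (b : ℕ → ℝ) (off m : ℕ) : (npJ b off m).PosDef := by
  rw [npJ_eq_conjTranspose_mul_self]
  exact .conjTranspose_mul_self _ (npJFactor_mulVec_injective b off m)

theorem normalized_m_function_in_R0_general
    (a1 b : ℕ → ℝ)
    (z : ℕ → ℂ) (n : ℕ)
    (theta : ℂ) (htheta : theta = (npJ b 0 (n + 1)).det / (npJ b 1 n).det)
    (Φ : ℂ → ℂ)
    (hΦ : ∀ lam : ℂ, Φ lam = theta * ((npH a1 b z 0 (n + 1) - lam • npJ b 0 (n + 1))⁻¹ 0 0)) :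
    (∀ lam : ℂ, lam.im ≠ 0 → 0 < (Φ lam).im / lam.im) ∧
    (⨆ y : {y : ℝ // 0 < y}, ‖((y.1 : ℂ)) * Φ ((y.1 : ℝ) * Complex.I)‖) = 1 := by
  have hθ : theta = ((npJ b 0 (n + 1))⁻¹ 0 0)⁻¹ := by
    rw [htheta, ← npJ_submatrix_succ_succ, det_div_det_submatrix_succ_succ]
  obtain rfl : Φ = fun lam => theta * (npH a1 b z 0 (n + 1) - lam • npJ b 0 (n + 1))⁻¹ 0 0 :=
    funext hΦ
  subst hθ
  exact normalized_resolvent_apply_mem_R0 (npH_isHermitian a1 b z 0 (n + 1))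
    (npJ_posDef b 0 (n + 1)) 0

/-- the normalized m-function `θₙ m_{[0,n]}`, where
`m_{[0,n]}(λ) = ((H_{[0,n]} - λ J_{[0,n]})⁻¹ e₀, e₀)` and
`θₙ = det J_{[0,n]} / det J_{[1,n]} > 0`, belongs to the class `R₀`:
`Im(θₙ m_{[0,n]}(λ))/Im λ > 0` off the real axis and `sup_{y>0} |y θₙ m_{[0,n]}(iy)| = 1`. -/
theorem normalized_m_function_in_R0
    (a1 b : ℕ → ℝ) (hb : ∀ j, 0 < b j)
    (z : ℕ → ℂ) (hz : ∀ j, 0 < (z j).im) (n : ℕ)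
    (theta : ℂ) (htheta : theta = (npJ b 0 (n + 1)).det / (npJ b 1 n).det)
    (Φ : ℂ → ℂ)
    (hΦ : ∀ lam : ℂ, Φ lam = theta * ((npH a1 b z 0 (n + 1) - lam • npJ b 0 (n + 1))⁻¹ 0 0)) :
    (∀ lam : ℂ, lam.im ≠ 0 → 0 < (Φ lam).im / lam.im) ∧
    (⨆ y : {y : ℝ // 0 < y}, ‖((y.1 : ℂ)) * Φ ((y.1 : ℝ) * Complex.I)‖) = 1 :=
  normalized_m_function_in_R0_general a1 b z n theta htheta Φ hΦ
end
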